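/- Let p > 3 be a prime and let A, B be integers with p ∤ B and with A² − 4B a nonzero quadratic residue modulo p (i.e., the Legendre symbol ((A²−4B)/p) = 1). Then for every natural number n, the rational number ∑_{k=0}^{p-1} (1 − B^{−k})·v_k(A,B)·H_k^n is congruent to 0 modulo p. -/

import Mathlib

/-- The companion Lucas sequence `v_n(A,B)`. -/
def lucasV (A B : ℤ) : ℕ → ℤ
  | 0 => 2
  | 1 => A
  | n + 2 => A * lucasV A B (n + 1) - B * lucasV A B n

/-- `x ≡ y (mod p^m)` for rational numbers: `x - y = p^m * r` with `p ∤ den r`. -/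
def ratCong (p m : ℕ) (x y : ℚ) : Prop :=
  ∃ r : ℚ, x - y = (p : ℚ) ^ m * r ∧ ¬ (p ∣ r.den)

/-!
Let `α, β ∈ 𝔽_p` be the roots of `X² - A X + B`; they exist because the discriminant is a
nonzero square, and they are nonzero because `p ∤ B`. Then `v_k ≡ α^k + β^k` and
`B^{-k} v_k ≡ α^{-k} + β^{-k}`, so the sum reduces to `∑_k (t^k - t^{-k}) H_k^n` for
`t = α` and `t = β`. Since `t^{p-1-k} = t^{-k}` and `H_{p-1-k} ≡ H_k (mod p)`, the involution
`k ↦ p-1-k` changes the sign of every summand, so each sum vanishes as `p` is odd.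
-/

open Finset

theorem intCast_lucasV {R : Type*} [CommRing R] {A B : ℤ} {α β : R} (hsum : α + β = A)
    (hprod : α * β = B) : ∀ k, (lucasV A B k : R) = α ^ k + β ^ k
  | 0 => by norm_num [lucasV]
  | 1 => by simp [lucasV, hsum]
  | k + 2 => by
    rw [lucasV, Int.cast_sub, Int.cast_mul, Int.cast_mul, intCast_lucasV hsum hprod k,
      intCast_lucasV hsum hprod (k + 1), ← hsum, ← hprod]
    ring

theorem exists_add_eq_and_mul_eq_of_isSquare {K : Type*} [Field K] [NeZero (2 : K)] {a b : K}
    (h : IsSquare (a ^ 2 - 4 * b)) : ∃ α β : K, α + β = a ∧ α * β = b := by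
  obtain ⟨s, hs⟩ := h
  obtain ⟨α, hα⟩ := exists_quadratic_eq_zero (a := 1) (b := -a) (c := b) one_ne_zero
    ⟨s, by rw [discrim]; linear_combination hs⟩
  exact ⟨α, a - α, by ring, by linear_combination -hα⟩

theorem Finset.sum_range_eq_zero_of_reflect_eq_neg {R : Type*} [Ring R] [NoZeroDivisors R]
    [NeZero (2 : R)] {m : ℕ} {f : ℕ → R} (hf : ∀ k < m, f (m - 1 - k) = -f k) :
    ∑ k ∈ range m, f k = 0 := by
  have hneg : ∑ k ∈ range m, f k = -∑ k ∈ range m, f k := calc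
    ∑ k ∈ range m, f k = ∑ k ∈ range m, f (m - 1 - k) := (sum_range_reflect f m).symm
    _ = ∑ k ∈ range m, -f k := sum_congr rfl fun k hk => hf k (mem_range.1 hk)
    _ = -∑ k ∈ range m, f k := sum_neg_distrib f
  have h2 : (2 : R) * ∑ k ∈ range m, f k = 0 := by
    rw [two_mul]; nth_rw 1 [hneg]; exact neg_add_cancel _
  exact (mul_eq_zero.1 h2).resolve_left (NeZero.ne 2)

theorem ZMod.natCast_self_sub {p i : ℕ} (hi : i ≤ p) :
    ((p - i : ℕ) : ZMod p) = -(i : ZMod p) := by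
  rw [Nat.cast_sub hi, ZMod.natCast_self, zero_sub]

theorem ZMod.natCast_ne_zero_of_pos_of_lt {p i : ℕ} (h0 : 0 < i) (hi : i < p) :
    (i : ZMod p) ≠ 0 := by
  rw [Ne, ZMod.natCast_eq_zero_iff]
  exact Nat.not_dvd_of_pos_of_lt h0 hi

/-- `x` is `p`-integral with reduction `z`; on such rationals the cast `ℚ → ZMod p`, which is
`num / den`, is additive and multiplicative. -/
def HasResidue (p : ℕ) [Fact p.Prime] (x : ℚ) (z : ZMod p) : Prop :=
  (x.den : ZMod p) ≠ 0 ∧ (x : ZMod p) = z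

namespace HasResidue

variable {p : ℕ} [Fact p.Prime] {x y : ℚ} {z w : ZMod p}

theorem intCast (m : ℤ) : HasResidue p m m := ⟨by simp, Rat.cast_intCast m⟩

theorem natCast (m : ℕ) : HasResidue p m m := ⟨by simp, Rat.cast_natCast m⟩

theorem one : HasResidue p 1 1 := by simpa using natCast (p := p) 1

theorem add (hx : HasResidue p x z) (hy : HasResidue p y w) : HasResidue p (x + y) (z + w) :=
  ⟨ne_zero_of_dvd_ne_zero (by rw [Nat.cast_mul]; exact mul_ne_zero hx.1 hy.1)
    (Nat.cast_dvd_cast (Rat.add_den_dvd x y)),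
    by rw [Rat.cast_add_of_ne_zero hx.1 hy.1, hx.2, hy.2]⟩

theorem mul (hx : HasResidue p x z) (hy : HasResidue p y w) : HasResidue p (x * y) (z * w) :=
  ⟨ne_zero_of_dvd_ne_zero (by rw [Nat.cast_mul]; exact mul_ne_zero hx.1 hy.1)
    (Nat.cast_dvd_cast (Rat.mul_den_dvd x y)),
    by rw [Rat.cast_mul_of_ne_zero hx.1 hy.1, hx.2, hy.2]⟩

theorem neg (hx : HasResidue p x z) : HasResidue p (-x) (-z) :=
  ⟨by rw [Rat.den_neg_eq_den]; exact hx.1, by rw [Rat.cast_neg, hx.2]⟩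

theorem sub (hx : HasResidue p x z) (hy : HasResidue p y w) : HasResidue p (x - y) (z - w) := by
  simpa only [sub_eq_add_neg] using hx.add hy.neg

theorem pow (hx : HasResidue p x z) (n : ℕ) : HasResidue p (x ^ n) (z ^ n) := by
  induction n with
  | zero => simpa using one
  | succ n ih => simpa only [pow_succ] using ih.mul hx

theorem inv (hx : HasResidue p x z) (hz : z ≠ 0) : HasResidue p x⁻¹ z⁻¹ := by
  have hnum : (x.num : ZMod p) ≠ 0 := by
    intro h
    rw [← hx.2, Rat.cast_def, h, zero_div] at hz
    exact hz rfl
  have hx0 : x ≠ 0 := by rintro rfl; exact hnum (by simp)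
  refine ⟨?_, by rw [Rat.cast_inv_of_ne_zero hnum, hx.2]⟩
  rw [Rat.den_inv_of_ne_zero hx0, Ne, ZMod.natCast_eq_zero_iff, ← Int.natCast_dvd,
    ← ZMod.intCast_zmod_eq_zero_iff_dvd]
  exact hnum

theorem sum {ι : Type*} (s : Finset ι) {f : ι → ℚ} {g : ι → ZMod p}
    (h : ∀ i ∈ s, HasResidue p (f i) (g i)) :
    HasResidue p (∑ i ∈ s, f i) (∑ i ∈ s, g i) := by
  classical
  induction s using Finset.induction_on with
  | empty => simpa using natCast (p := p) 0
  | insert i s hi ih =>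
    rw [sum_insert hi, sum_insert hi]
    exact (h i (mem_insert_self i s)).add (ih fun j hj => h j (mem_insert_of_mem hj))

theorem ratCong (hx : HasResidue p x 0) : ratCong p 1 x 0 := by
  have hden := hx.1
  have hnum : ((x.num : ℤ) : ZMod p) = 0 := by
    have := hx.2
    rw [Rat.cast_def, div_eq_zero_iff] at this
    exact this.resolve_right hden
  obtain ⟨e, he⟩ := (ZMod.intCast_zmod_eq_zero_iff_dvd _ p).1 hnum
  refine ⟨Rat.divInt e x.den, ?_, fun hp => hden ?_⟩
  · rw [sub_zero, pow_one, Rat.divInt_eq_div, ← mul_div_assoc]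
    conv_lhs => rw [← Rat.num_div_den x, he]
    push_cast; rfl
  · have := Nat.dvd_trans hp (Int.natCast_dvd_natCast.1 (Rat.den_dvd e x.den))
    exact (ZMod.natCast_eq_zero_iff _ _).2 this

end HasResidue

def harmonicMod (p k : ℕ) : ZMod p := ∑ i ∈ range k, ((i + 1 : ℕ) : ZMod p)⁻¹

section Harmonic

variable {p : ℕ}

theorem harmonicMod_succ (k : ℕ) :
    harmonicMod p (k + 1) = harmonicMod p k + ((k + 1 : ℕ) : ZMod p)⁻¹ :=
  sum_range_succ _ _

variable [Fact p.Prime] [NeZero (2 : ZMod p)]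

theorem harmonicMod_card_sub_one : harmonicMod p (p - 1) = 0 :=
  sum_range_eq_zero_of_reflect_eq_neg fun i hi => by
    rw [show p - 1 - 1 - i + 1 = p - (i + 1) by omega, ZMod.natCast_self_sub (by omega), inv_neg]

theorem harmonicMod_card_sub_one_sub {k : ℕ} (hk : k < p) :
    harmonicMod p (p - 1 - k) = harmonicMod p k := by
  induction k with
  | zero => rw [Nat.sub_zero, harmonicMod_card_sub_one, harmonicMod, sum_range_zero]
  | succ k ih =>
    rw [show p - 1 - k = p - 1 - (k + 1) + 1 by omega, harmonicMod_succ,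
      show p - 1 - (k + 1) + 1 = p - (k + 1) by omega, ZMod.natCast_self_sub hk.le, inv_neg]
      at ih
    rw [harmonicMod_succ, ← ih (by omega)]
    ring

theorem sum_range_pow_sub_inv_mul_harmonicMod_pow_eq_zero {t : ZMod p} (ht : t ≠ 0) (n : ℕ) :
    ∑ k ∈ range p, (t ^ k - (t ^ k)⁻¹) * harmonicMod p k ^ n = 0 :=
  sum_range_eq_zero_of_reflect_eq_neg fun k hk => by
    have hpow : t ^ (p - 1 - k) = (t ^ k)⁻¹ := eq_inv_of_mul_eq_one_left <| by
      rw [← pow_add, Nat.sub_add_cancel (by omega), ZMod.pow_card_sub_one_eq_one ht]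
    rw [hpow, inv_inv, harmonicMod_card_sub_one_sub hk]
    ring

end Harmonic

section Main

variable {p : ℕ} [Fact p.Prime]

theorem hasResidue_harmonic {k : ℕ} (hk : k < p) : HasResidue p (harmonic k) (harmonicMod p k) :=
  HasResidue.sum _ fun i hi => (HasResidue.natCast (i + 1)).inv <|
    ZMod.natCast_ne_zero_of_pos_of_lt i.succ_pos (by linarith [mem_range.1 hi])

theorem hasResidue_summand {A B : ℤ} (hB : (B : ZMod p) ≠ 0) {k : ℕ} (hk : k < p) (n : ℕ) :
    HasResidue p ((1 - (B : ℚ) ^ (-(k : ℤ))) * (lucasV A B k : ℚ) * harmonic k ^ n)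
      ((1 - ((B : ZMod p) ^ k)⁻¹) * (lucasV A B k : ZMod p) * harmonicMod p k ^ n) := by
  rw [zpow_neg, zpow_natCast]
  exact ((HasResidue.one.sub (((HasResidue.intCast B).pow k).inv (pow_ne_zero k hB))).mul
    (HasResidue.intCast _)).mul ((hasResidue_harmonic hk).pow n)

end Main

theorem stmt6 (p : ℕ) [Fact p.Prime] (hp3 : 3 < p) (A B : ℤ) (hB : ¬ ((p : ℤ) ∣ B))
    (hD : legendreSym p (A ^ 2 - 4 * B) = 1) (n : ℕ) :
    ratCong p 1
      (∑ k ∈ Finset.range p,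
        (1 - (B : ℚ) ^ (-(k : ℤ))) * (lucasV A B k : ℚ) * harmonic k ^ n) 0 := by
  have : NeZero (2 : ZMod p) :=
    ⟨by exact_mod_cast ZMod.natCast_ne_zero_of_pos_of_lt two_pos (by omega : 2 < p)⟩
  have hD0 : ((A ^ 2 - 4 * B : ℤ) : ZMod p) ≠ 0 := by
    rw [Ne, ← legendreSym.eq_zero_iff, hD]; exact one_ne_zero
  have hsq := (legendreSym.eq_one_iff p hD0).1 hD
  push_cast at hsq
  obtain ⟨α, β, hsum, hprod⟩ := exists_add_eq_and_mul_eq_of_isSquare hsq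
  have hb : (B : ZMod p) ≠ 0 := by rwa [Ne, ZMod.intCast_zmod_eq_zero_iff_dvd]
  have hα : α ≠ 0 := left_ne_zero_of_mul (hprod ▸ hb)
  have hβ : β ≠ 0 := right_ne_zero_of_mul (hprod ▸ hb)
  have hres := HasResidue.sum (range p) fun k hk =>
    hasResidue_summand (A := A) hb (mem_range.1 hk) n
  suffices h : ∑ k ∈ range p,
      (1 - ((B : ZMod p) ^ k)⁻¹) * (lucasV A B k : ZMod p) * harmonicMod p k ^ n = 0 by
    rw [h] at hres; exact hres.ratCong
  calc _ = ∑ k ∈ range p, ((α ^ k - (α ^ k)⁻¹) * harmonicMod p k ^ n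
          + (β ^ k - (β ^ k)⁻¹) * harmonicMod p k ^ n) := by
        refine sum_congr rfl fun k _ => ?_
        rw [intCast_lucasV hsum hprod, ← hprod]
        field_simp
        ring
    _ = 0 := by
      rw [sum_add_distrib, sum_range_pow_sub_inv_mul_harmonicMod_pow_eq_zero hα,
        sum_range_pow_sub_inv_mul_harmonicMod_pow_eq_zero hβ, add_zero]
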